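/- arXiv:2511.16802 — 4 statements merged into one kernel-verified Lean document; each statement's English description precedes it below -/
import Mathlib

section
/- For p ∈ (0,1), q ∈ [0,1), and l ≥ 0, the inequality (1+l)/(1-p(1-q)+l) · sqrt(1-p(1-q²)) < 1 holds if and only if l > (1-p)(1-q)/(sqrt(1-p(1-q²)) + q). -/
/-!
Write `s = √(1 - p(1 - q²))` and `c = 1 - p(1 - q)`. Since `1 - s² = p(1 - q²)`, one has
`(1 + q)(s - c) = (1 - s)(s - q)`, so `(1 + l)s < c + l`, i.e. `s - c < l(1 - s)`, is equivalent
to `l > (s - q)/(1 + q)` once `s < 1`. Since `s² - q² = (1 - p)(1 - q²)`, this threshold equals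
`(1 - p)(1 - q)/(s + q)`.
-/

section

variable {p q s : ℝ}

lemma one_add_mul_sub_eq_of_sq_eq (hs : s ^ 2 = 1 - p * (1 - q ^ 2)) :
    (1 + q) * (s - (1 - p * (1 - q))) = (1 - s) * (s - q) := by
  linear_combination hs

lemma sub_mul_add_eq_of_sq_eq (hs : s ^ 2 = 1 - p * (1 - q ^ 2)) :
    (s - q) * (s + q) = (1 - p) * (1 - q) * (1 + q) := by
  linear_combination hs

lemma lt_one_of_sq_eq (hs : s ^ 2 = 1 - p * (1 - q ^ 2)) (hs0 : 0 ≤ s) (hp : 0 < p)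
    (hq : q ^ 2 < 1) : s < 1 :=
  (pow_lt_one_iff_of_nonneg hs0 two_ne_zero).1 (by nlinarith)

lemma add_pos_of_sq_eq (hs : s ^ 2 = 1 - p * (1 - q ^ 2)) (hs0 : 0 ≤ s) (hp : p < 1)
    (hq : q ^ 2 < 1) : 0 < s + q := by
  have hqs : |q| < s := abs_lt_of_sq_lt_sq (by nlinarith) hs0
  linarith [neg_abs_le q]

lemma div_mul_lt_one_iff_of_sq_eq (l : ℝ) (hs : s ^ 2 = 1 - p * (1 - q ^ 2)) (hs1 : s < 1)
    (hq : 0 < 1 + q) (hc : 0 < 1 - p * (1 - q) + l) :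
    (1 + l) / (1 - p * (1 - q) + l) * s < 1 ↔ (s - q) / (1 + q) < l := by
  rw [div_mul_eq_mul_div, div_lt_one hc, div_lt_iff₀ hq]
  calc (1 + l) * s < 1 - p * (1 - q) + l
      ↔ (1 + q) * (s - (1 - p * (1 - q))) < (1 + q) * (l * (1 - s)) := by
        rw [mul_lt_mul_iff_right₀ hq]
        constructor <;> intro h <;> linarith
    _ ↔ (1 - s) * (s - q) < (1 - s) * (l * (1 + q)) := by
        rw [one_add_mul_sub_eq_of_sq_eq hs, mul_left_comm, mul_comm (1 + q), mul_left_comm]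
    _ ↔ s - q < l * (1 + q) := mul_lt_mul_iff_right₀ (sub_pos.2 hs1)

lemma sub_div_one_add_eq_of_sq_eq (hs : s ^ 2 = 1 - p * (1 - q ^ 2)) (hq : 0 < 1 + q)
    (hsq : 0 < s + q) : (s - q) / (1 + q) = (1 - p) * (1 - q) / (s + q) := by
  rw [div_eq_div_iff hq.ne' hsq.ne']
  exact sub_mul_add_eq_of_sq_eq hs

end

theorem stmt_0 (p q l : ℝ) (hp0 : 0 < p) (hp1 : p < 1) (hq0 : 0 ≤ q) (hq1 : q < 1)
    (hl : 0 ≤ l) :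
    (1 + l) / (1 - p * (1 - q) + l) * Real.sqrt (1 - p * (1 - q ^ 2)) < 1 ↔
      l > (1 - p) * (1 - q) / (Real.sqrt (1 - p * (1 - q ^ 2)) + q) := by
  have hq2 : q ^ 2 < 1 := by nlinarith
  have hs : Real.sqrt (1 - p * (1 - q ^ 2)) ^ 2 = 1 - p * (1 - q ^ 2) :=
    Real.sq_sqrt (by nlinarith)
  have hs0 := Real.sqrt_nonneg (1 - p * (1 - q ^ 2))
  have hq : 0 < 1 + q := by linarith
  have hc : 0 < 1 - p * (1 - q) + l := by nlinarith
  rw [div_mul_lt_one_iff_of_sq_eq l hs (lt_one_of_sq_eq hs hs0 hp0 hq2) hq hc,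
    sub_div_one_add_eq_of_sq_eq hs hq (add_pos_of_sq_eq hs hs0 hp1 hq2), gt_iff_lt]
end

section
/- Fix l ≥ 0 and p ∈ (0,1). The function q ↦ (1+l)/(1-p(1-q)+l) · sqrt(1-p(1-q²)), defined for q ∈ [0,1], attains its minimum on [0,1] at q* = (1-p)/(1-p+l), and the minimum value is strictly less than 1 whenever l > 0. -/
/-!
Write `a = 1 - p`, `D(q) = c(p,q) + l = a (1 + l/a) + p q` and `S(q) = c(p,q²) = a + p q²`.
By the weighted Cauchy–Schwarz inequality with weights `a, p`,
`D(q)² ≤ S(q) · (a (1 + l/a)² + p) = S(q) · E / a` with `E = (1-p)(1+l)² + p l²`,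
with equality exactly at `q = a / (a + l)`. Hence `R_c/R_0 = (1+l) √(S/D²)` is minimal there,
with value `(1+l) √((1-p)/E)`, which is `< 1` because `E - (1-p)(1+l)² = p l² > 0`.
-/

namespace ControlReproduction

open Real

noncomputable section

/-- The factor `c(p,q) = 1 - p(1-q)` of the paper. -/
def protectionFactor (p q : ℝ) : ℝ := 1 - p * (1 - q)

def controlRatio (l p q : ℝ) : ℝ :=
  (1 + l) / (protectionFactor p q + l) * √(protectionFactor p (q ^ 2))

def optimalFailureProb (l p : ℝ) : ℝ := (1 - p) / (1 - p + l)

variable {l p q : ℝ}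

lemma controlRatio_eq_mul_sqrt (hD : 0 < protectionFactor p q + l) :
    controlRatio l p q =
      (1 + l) * √(protectionFactor p (q ^ 2) / (protectionFactor p q + l) ^ 2) := by
  rw [controlRatio, sqrt_div' _ (sq_nonneg _), sqrt_sq hD.le]
  ring

lemma ratio_optimalFailureProb (hp : p < 1) (hl : 0 ≤ l) :
    protectionFactor p (optimalFailureProb l p ^ 2) /
        (protectionFactor p (optimalFailureProb l p) + l) ^ 2 =
      (1 - p) / ((1 - p) * (1 + l) ^ 2 + p * l ^ 2) := by
  have hs : 1 - p + l ≠ 0 := by linarith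
  have hE : (1 - p) * (1 + l) ^ 2 + p * l ^ 2 ≠ 0 := by nlinarith
  have hD : protectionFactor p (optimalFailureProb l p) + l =
      ((1 - p) * (1 + l) ^ 2 + p * l ^ 2) / (1 - p + l) := by
    unfold protectionFactor optimalFailureProb
    field_simp
    ring
  have hS : protectionFactor p (optimalFailureProb l p ^ 2) =
      (1 - p) * ((1 - p) * (1 + l) ^ 2 + p * l ^ 2) / (1 - p + l) ^ 2 := by
    unfold protectionFactor optimalFailureProb
    field_simp
    ring
  rw [hD, hS]
  field_simp

lemma ratio_optimal_le (hp : 0 ≤ p) (hE : 0 < (1 - p) * (1 + l) ^ 2 + p * l ^ 2)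
    (hD : 0 < protectionFactor p q + l) :
    (1 - p) / ((1 - p) * (1 + l) ^ 2 + p * l ^ 2) ≤
      protectionFactor p (q ^ 2) / (protectionFactor p q + l) ^ 2 := by
  rw [div_le_div_iff₀ hE (by positivity)]
  have key : protectionFactor p (q ^ 2) * ((1 - p) * (1 + l) ^ 2 + p * l ^ 2) -
      (1 - p) * (protectionFactor p q + l) ^ 2 = p * ((1 - p) * (1 - q) - l * q) ^ 2 := by
    unfold protectionFactor
    ring
  linarith [mul_nonneg hp (sq_nonneg ((1 - p) * (1 - q) - l * q))]

lemma one_add_mul_sqrt_lt_one (hp0 : 0 < p) (hp1 : p < 1) (hl : 0 < l) :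
    (1 + l) * √((1 - p) / ((1 - p) * (1 + l) ^ 2 + p * l ^ 2)) < 1 := by
  have hE : 0 < (1 - p) * (1 + l) ^ 2 + p * l ^ 2 := by nlinarith
  calc (1 + l) * √((1 - p) / ((1 - p) * (1 + l) ^ 2 + p * l ^ 2))
      = √((1 + l) ^ 2 * (1 - p) / ((1 - p) * (1 + l) ^ 2 + p * l ^ 2)) := by
        rw [mul_div_assoc, sqrt_mul (sq_nonneg _), sqrt_sq (by linarith)]
    _ < 1 := by
        rw [sqrt_lt' one_pos, one_pow, div_lt_one hE]
        nlinarith [mul_pos hp0 (pow_pos hl 2)]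

end

end ControlReproduction

open ControlReproduction in
theorem stmt_5 (l p : ℝ) (hl : 0 ≤ l) (hp0 : 0 < p) (hp1 : p < 1) :
    (∀ q ∈ Set.Icc (0 : ℝ) 1,
      (1 + l) / (1 - p * (1 - (1 - p) / (1 - p + l)) + l) *
          Real.sqrt (1 - p * (1 - ((1 - p) / (1 - p + l)) ^ 2)) ≤
        (1 + l) / (1 - p * (1 - q) + l) * Real.sqrt (1 - p * (1 - q ^ 2))) ∧
    (0 < l →
      (1 + l) / (1 - p * (1 - (1 - p) / (1 - p + l)) + l) *
          Real.sqrt (1 - p * (1 - ((1 - p) / (1 - p + l)) ^ 2)) < 1) := by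
  have hE : 0 < (1 - p) * (1 + l) ^ 2 + p * l ^ 2 := by nlinarith
  have hD : ∀ q, 0 ≤ q → 0 < protectionFactor p q + l := fun q hq => by
    unfold protectionFactor
    nlinarith
  have hmin : controlRatio l p (optimalFailureProb l p) =
      (1 + l) * √((1 - p) / ((1 - p) * (1 + l) ^ 2 + p * l ^ 2)) := by
    rw [controlRatio_eq_mul_sqrt (hD _ (by unfold optimalFailureProb; positivity)),
      ratio_optimalFailureProb hp1 hl]
  refine ⟨fun q ⟨hq0, _⟩ => ?_, fun hl0 => ?_⟩
  · change controlRatio l p (optimalFailureProb l p) ≤ controlRatio l p q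
    rw [hmin, controlRatio_eq_mul_sqrt (hD q hq0)]
    exact mul_le_mul_of_nonneg_left (Real.sqrt_le_sqrt (ratio_optimal_le hp0.le hE (hD q hq0)))
      (by linarith)
  · change controlRatio l p (optimalFailureProb l p) < 1
    exact hmin ▸ one_add_mul_sqrt_lt_one hp0 hp1 hl0
end

section
/- Let a₀, w₀, γ > 0, p₀ = a₀/(a₀+w₀), q ∈ [0,1), l ≥ 0, and R₀ > 0. Then R₀·(1+l)/(c(p₀,q)+l)·sqrt(1-p₀(1-q²) - p₀(1-q)²w₀/(a₀+w₀+γ)) < R₀·(1+l)/(c(p₀,q)+l)·sqrt(1-p₀(1-q²)). -/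
open Real

lemma one_sub_mul_one_sub_pos {p q : ℝ} (hp0 : 0 ≤ p) (hp1 : p < 1) (hq : 0 ≤ q) :
    0 < 1 - p * (1 - q) := by
  nlinarith

theorem stmt_7 (a₀ w₀ γ q l R₀ : ℝ) (ha : 0 < a₀) (hw : 0 < w₀) (hγ : 0 < γ)
    (hq0 : 0 ≤ q) (hq1 : q < 1) (hl : 0 ≤ l) (hR : 0 < R₀)
    (hpos : 0 < 1 - (a₀ / (a₀ + w₀)) * (1 - q ^ 2)) :
    R₀ * (1 + l) / (1 - (a₀ / (a₀ + w₀)) * (1 - q) + l) *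
        Real.sqrt (1 - (a₀ / (a₀ + w₀)) * (1 - q ^ 2) -
          (a₀ / (a₀ + w₀)) * (1 - q) ^ 2 * w₀ / (a₀ + w₀ + γ)) <
      R₀ * (1 + l) / (1 - (a₀ / (a₀ + w₀)) * (1 - q) + l) *
        Real.sqrt (1 - (a₀ / (a₀ + w₀)) * (1 - q ^ 2)) := by
  set p := a₀ / (a₀ + w₀)
  have hp0 : 0 < p := by positivity
  have hp1 : p < 1 := (div_lt_one (by positivity)).2 (lt_add_of_pos_right a₀ hw)
  have hfactor : 0 < R₀ * (1 + l) / (1 - p * (1 - q) + l) :=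
    div_pos (by positivity) (add_pos_of_pos_of_nonneg (one_sub_mul_one_sub_pos hp0.le hp1 hq0) hl)
  have hdrop : 0 < p * (1 - q) ^ 2 * w₀ / (a₀ + w₀ + γ) := by
    have : 0 < 1 - q := sub_pos.2 hq1
    positivity
  exact mul_lt_mul_of_pos_left ((sqrt_lt_sqrt_iff_of_pos hpos).2 (sub_lt_self _ hdrop)) hfactor
end

section
/- Consider the cubic λ³ + Aλ² + Bλ + C with A = γ+μ+k, B = k(γ+μ+γδ), C = 2μkγδ, where γ, μ, k, δ > 0. All roots have negative real part if and only if k > -(γδ(γ-μ) + (γ+μ)²)/(γ+μ+γδ). In particular, if γ ≥ μ this holds for all k > 0. -/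
/-!
A root `x + y i` of `z³ + A z² + B z + C` with `y ≠ 0` is characterised by
`y² = 3x² + 2Ax + B` and `2x((2x + A)² + B) = C - AB`. With positive coefficients every real
root is negative, so a root with `x ≥ 0` exists exactly when `AB ≤ C`: then the intermediate
value theorem solves the second equation with `x ≥ 0`, and the first one fixes `y`.
For the model, `AB - C = k (k (γ + μ + γδ) + γδ(γ - μ) + (γ + μ)²)`.
-/

open Complex

lemma cubic_eval_re_add_im (A B C x y : ℝ) :
    ((x : ℂ) + y * I) ^ 3 + A * ((x : ℂ) + y * I) ^ 2 + B * ((x : ℂ) + y * I) + C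
      = ((x ^ 3 - 3 * x * y ^ 2 + A * (x ^ 2 - y ^ 2) + B * x + C : ℝ) : ℂ)
        + ((y * (3 * x ^ 2 + 2 * A * x + B - y ^ 2) : ℝ) : ℂ) * I := by
  push_cast
  linear_combination (3 * (x : ℂ) * y ^ 2 + y ^ 3 * I + A * y ^ 2) * I_sq

lemma cubic_eval_eq_zero_iff_of_im_ne_zero (A B C : ℝ) {x y : ℝ} (hy : y ≠ 0) :
    ((x : ℂ) + y * I) ^ 3 + A * ((x : ℂ) + y * I) ^ 2 + B * ((x : ℂ) + y * I) + C = 0 ↔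
      y ^ 2 = 3 * x ^ 2 + 2 * A * x + B ∧ 2 * x * ((2 * x + A) ^ 2 + B) = C - A * B := by
  rw [cubic_eval_re_add_im, Complex.ext_iff]
  simp only [add_re, ofReal_re, mul_re, ofReal_im, I_re, I_im, mul_zero, mul_one, sub_self,
    add_zero, zero_re, add_im, mul_im, zero_add, zero_im, mul_eq_zero, hy, false_or]
  constructor
  · rintro ⟨hre, him⟩
    have hy2 : y ^ 2 = 3 * x ^ 2 + 2 * A * x + B := by linarith
    exact ⟨hy2, by rw [hy2] at hre; linarith⟩
  · rintro ⟨hy2, hx⟩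
    exact ⟨by rw [hy2]; linarith, by linarith⟩

lemma cubic_real_root_neg {A B C x : ℝ} (hA : 0 ≤ A) (hB : 0 ≤ B) (hC : 0 < C)
    (hx : x ^ 3 + A * x ^ 2 + B * x + C = 0) : x < 0 := by
  by_contra! hx0
  have : 0 ≤ x ^ 3 + A * x ^ 2 + B * x := by positivity
  linarith

lemma cubic_root_re_neg_of_lt {A B C : ℝ} (hA : 0 ≤ A) (hB : 0 < B) (hC : 0 < C)
    (hlt : C < A * B) {z : ℂ} (hz : z ^ 3 + A * z ^ 2 + B * z + C = 0) : z.re < 0 := by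
  rw [← re_add_im z] at hz
  by_cases hy : z.im = 0
  · have hre := congrArg re hz
    simp only [cubic_eval_re_add_im, hy, add_re, ofReal_re, mul_re, ofReal_im, I_re, I_im,
      zero_re] at hre
    exact cubic_real_root_neg hA hB.le hC (by linear_combination hre)
  · obtain ⟨-, hx⟩ := (cubic_eval_eq_zero_iff_of_im_ne_zero A B C hy).1 hz
    by_contra! hx0
    have : 0 ≤ 2 * z.re * ((2 * z.re + A) ^ 2 + B) := by positivity
    linarith

lemma exists_cubic_root_re_nonneg_of_le {A B C : ℝ} (hA : 0 ≤ A) (hB : 0 < B) (hC : 0 ≤ C)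
    (hle : A * B ≤ C) : ∃ z : ℂ, z ^ 3 + A * z ^ 2 + B * z + C = 0 ∧ 0 ≤ z.re := by
  set g : ℝ → ℝ := fun x ↦ 2 * x * ((2 * x + A) ^ 2 + B)
  have hM : 0 ≤ C / (2 * B) := by positivity
  have hgM : C - A * B ≤ g (C / (2 * B)) := by
    have hB' : 2 * (C / (2 * B)) * B = C := by field_simp
    have : 2 * (C / (2 * B)) * B ≤ g (C / (2 * B)) := by
      simp only [g]
      gcongr
      nlinarith [sq_nonneg (2 * (C / (2 * B)) + A)]
    nlinarith
  obtain ⟨x, ⟨hx0, -⟩, hgx⟩ := intermediate_value_Icc hM (by fun_prop)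
    ⟨by simp only [g]; linarith, hgM⟩
  have hpos : 0 < 3 * x ^ 2 + 2 * A * x + B := by positivity
  have hy : √(3 * x ^ 2 + 2 * A * x + B) ≠ 0 := (Real.sqrt_pos.2 hpos).ne'
  refine ⟨x + √(3 * x ^ 2 + 2 * A * x + B) * I,
    (cubic_eval_eq_zero_iff_of_im_ne_zero A B C hy).2 ⟨Real.sq_sqrt hpos.le, hgx⟩, ?_⟩
  simpa using hx0

theorem cubic_roots_re_neg_iff {A B C : ℝ} (hA : 0 < A) (hB : 0 < B) (hC : 0 < C) :
    (∀ z : ℂ, z ^ 3 + A * z ^ 2 + B * z + C = 0 → z.re < 0) ↔ C < A * B := by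
  refine ⟨fun h ↦ ?_, fun hlt z ↦ cubic_root_re_neg_of_lt hA.le hB hC hlt⟩
  by_contra! hle
  obtain ⟨z, hz, hre⟩ := exists_cubic_root_re_nonneg_of_le hA.le hB hC.le hle
  exact (h z hz).not_ge hre

theorem stmt_17 (γ μ k δ : ℝ) (hγ : 0 < γ) (hμ : 0 < μ) (hk : 0 < k) (hδ : 0 < δ) :
    ((∀ z : ℂ, z ^ 3 + (γ + μ + k : ℝ) * z ^ 2 + (k * (γ + μ + γ * δ) : ℝ) * z +
        (2 * μ * k * γ * δ : ℝ) = 0 → z.re < 0) ↔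
      k > -(γ * δ * (γ - μ) + (γ + μ) ^ 2) / (γ + μ + γ * δ)) ∧
    (γ ≥ μ → k > -(γ * δ * (γ - μ) + (γ + μ) ^ 2) / (γ + μ + γ * δ)) := by
  have hD : 0 < γ + μ + γ * δ := by positivity
  have hABC : (γ + μ + k) * (k * (γ + μ + γ * δ)) - 2 * μ * k * γ * δ
      = k * (k * (γ + μ + γ * δ) + (γ * δ * (γ - μ) + (γ + μ) ^ 2)) := by ring
  refine ⟨?_, fun hge ↦ ?_⟩
  · rw [cubic_roots_re_neg_iff (by positivity) (by positivity) (by positivity), gt_iff_lt,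
      div_lt_iff₀ hD, ← sub_pos, hABC, mul_pos_iff_of_pos_left hk]
    constructor <;> intro h <;> linarith
  · have hN : 0 < γ * δ * (γ - μ) + (γ + μ) ^ 2 := by
      have : 0 ≤ γ * δ * (γ - μ) := mul_nonneg (by positivity) (sub_nonneg.2 hge)
      positivity
    exact lt_trans (div_neg_of_neg_of_pos (neg_neg_of_pos hN) hD) hk
end
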